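/- Let G be a finite simple graph with n vertices and m edges, and let d₁ ≥ d₂ ≥ … ≥ dₙ be its vertex degrees listed in non-increasing order. Then the total irregularity of G satisfies irr_T(G) = 2(n+1)m − 2·Σ_{i=1}^{n} i·dᵢ. -/
import Mathlib


open Finset
open scoped Classical

/-- The total irregularity of a graph: the sum, over all unordered pairs of
distinct vertices, of the absolute difference of their degrees. -/
noncomputable def totalIrregularity {V : Type*} [Fintype V] (G : SimpleGraph V) : ℤ :=
  ∑ e ∈ (univ : Finset (Sym2 V)).filter (fun e => ¬ e.IsDiag),
    Sym2.lift ⟨fun u v => |(G.degree u : ℤ) - (G.degree v : ℤ)|,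
      fun _ _ => abs_sub_comm _ _⟩ e

/-- For a graph with `n` vertices, `m` edges and degree sequence
`d 0 ≥ d 1 ≥ … ≥ d (n-1)` (so `dᵢ` of the statement is `d (i-1)`), the total
irregularity equals `2(n+1)m - 2 Σ_{i=1}^{n} i·dᵢ`. -/
theorem stmt13 {V : Type*} [Fintype V] (G : SimpleGraph V)
    (n : ℕ) (hn : Fintype.card V = n) (m : ℕ) (hm : G.edgeFinset.card = m)
    (d : Fin n → ℕ) (hmono : ∀ i j : Fin n, i ≤ j → d j ≤ d i)
    (f : Fin n ≃ V) (hf : ∀ i, G.degree (f i) = d i) :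
    totalIrregularity G =
      2 * ((n : ℤ) + 1) * (m : ℤ) - 2 * ∑ i : Fin n, ((i : ℤ) + 1) * (d i : ℤ) := by
  have key : totalIrregularity G =
      ∑ x ∈ (univ : Finset (Fin n)).sigma (fun i => Ioi i), ((d x.1 : ℤ) - (d x.2 : ℤ)) := by
    refine Finset.sum_nbij'
      (fun e => Sym2.lift ⟨fun u v => (⟨min (f.symm u) (f.symm v), max (f.symm u) (f.symm v)⟩ :
          Σ _ : Fin n, Fin n), fun u v => by simp [min_comm, max_comm]⟩ e)
      (fun x => s(f x.1, f x.2)) ?_ ?_ ?_ ?_ ?_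
    · intro e he
      simp only [mem_filter, mem_univ, true_and] at he
      induction e using Sym2.ind with
      | _ u v =>
        simp only [Sym2.lift_mk, mem_sigma, mem_univ, true_and, mem_Ioi]
        have : f.symm u ≠ f.symm v := by
          simp only [Sym2.isDiag_iff_proj_eq] at he
          exact fun h => he (by simpa using congrArg f h)
        exact min_lt_max.2 this
    · intro x hx
      simp only [mem_sigma, mem_univ, true_and, mem_Ioi] at hx
      simp only [mem_filter, mem_univ, true_and, Sym2.isDiag_iff_proj_eq]
      exact fun h => absurd (f.injective h) (ne_of_lt hx)
    · intro e he
      induction e using Sym2.ind with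
      | _ u v =>
        simp only [Sym2.lift_mk]
        rcases le_total (f.symm u) (f.symm v) with h | h
        · simp [min_eq_left h, max_eq_right h]
        · simp [min_eq_right h, max_eq_left h, Sym2.eq_swap]
    · intro x hx
      simp only [mem_sigma, mem_univ, true_and, mem_Ioi] at hx
      simp only [Sym2.lift_mk, Equiv.symm_apply_apply]
      rw [min_eq_left hx.le, max_eq_right hx.le]
    · intro e he
      simp only [mem_filter, mem_univ, true_and] at he
      induction e using Sym2.ind with
      | _ u v =>
        have hne : f.symm u ≠ f.symm v := by
          simp only [Sym2.isDiag_iff_proj_eq] at he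
          exact fun h => he (by simpa using congrArg f h)
        have hdu : G.degree u = d (f.symm u) := by
          rw [← hf (f.symm u), Equiv.apply_symm_apply]
        have hdv : G.degree v = d (f.symm v) := by
          rw [← hf (f.symm v), Equiv.apply_symm_apply]
        simp only [Sym2.lift_mk, hdu, hdv]
        rcases le_total (f.symm u) (f.symm v) with h | h
        · rw [min_eq_left h, max_eq_right h]
          have : d (f.symm v) ≤ d (f.symm u) := hmono _ _ h
          rw [abs_of_nonneg (by exact_mod_cast sub_nonneg.2 (Int.ofNat_le.2 this))]
        · rw [min_eq_right h, max_eq_left h]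
          have : d (f.symm u) ≤ d (f.symm v) := hmono _ _ h
          rw [abs_of_nonpos (by exact_mod_cast sub_nonpos.2 (Int.ofNat_le.2 this))]
          ring
  rw [key, Finset.sum_sigma]
  have hsplit : ∀ i : Fin n, ∑ j ∈ Ioi i, ((d i : ℤ) - (d j : ℤ)) =
      ((n : ℤ) - 1 - i) * d i - ∑ j ∈ Ioi i, (d j : ℤ) := by
    intro i
    rw [Finset.sum_sub_distrib, Finset.sum_const, Fin.card_Ioi]
    have hi : (i : ℕ) < n := i.isLt
    have : ((n - 1 - (i : ℕ) : ℕ) : ℤ) = (n : ℤ) - 1 - i := by omega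
    rw [nsmul_eq_mul, this]
  simp only [hsplit]
  rw [Finset.sum_sub_distrib]
  have hswap : ∑ i : Fin n, ∑ j ∈ Ioi i, (d j : ℤ) = ∑ j : Fin n, (j : ℤ) * d j := by
    rw [Finset.sum_comm' (s' := fun j => Iio j) (t' := univ) (by
      intro x y; simp [mem_Ioi, mem_Iio])]
    refine Finset.sum_congr rfl fun j _ => ?_
    rw [Finset.sum_const, Fin.card_Iio, nsmul_eq_mul]
  rw [hswap]
  have hsum : ∑ i : Fin n, (d i : ℤ) = 2 * m := by
    have := G.sum_degrees_eq_twice_card_edges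
    have h2 : ∑ i : Fin n, (d i : ℕ) = 2 * m := by
      rw [← hm, ← this, ← Equiv.sum_comp f (fun v => G.degree v)]
      exact Finset.sum_congr rfl fun i _ => (hf i).symm
    exact_mod_cast h2
  have expand : 2 * ((n : ℤ) + 1) * (m : ℤ) = ((n : ℤ) + 1) * ∑ i : Fin n, (d i : ℤ) := by
    rw [hsum]; ring
  rw [expand, Finset.mul_sum, Finset.mul_sum, ← Finset.sum_sub_distrib, ← Finset.sum_sub_distrib]
  refine Finset.sum_congr rfl fun i _ => ?_
  ring
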